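/- arXiv:2311.13605 — 2 statements merged into one kernel-verified Lean document; each statement's English description precedes it below -/
import Mathlib

section
/- For every real parameter p > 0 and every equilibrium x of the IDMDE vector field, the characteristic polynomial of the Jacobian matrix J(x) factors as det(λI − J(x)) = (λ + 2)·(λ² + √(p²+4)). -/
/-- The IDMDE vector field with parameter `p`. -/
def idmde (p : ℝ) (x : ℝ × ℝ × ℝ) : ℝ × ℝ × ℝ :=
  (x.2.1 * x.2.2 - x.1, (x.2.2 - p) * x.1 - x.2.1, 1 - x.1 * x.2.1)

/-- The Jacobian matrix of the IDMDE vector field with parameter `p`,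
evaluated at `x = (x₁,x₂,x₃)`. -/
def idmdeJacobian (p : ℝ) (x : ℝ × ℝ × ℝ) : Matrix (Fin 3) (Fin 3) ℝ :=
  !![-1, x.2.2, x.2.1;
     x.2.2 - p, -1, x.1;
     -x.2.1, -x.1, 0]

/-!
At an equilibrium `x₁ = x₂x₃`, `x₂ = (x₃ - p)x₁` and `x₁x₂ = 1`, so `x₁² = x₁x₂x₃ = x₃` and
`x₂² = x₁x₂(x₃ - p) = x₃ - p`. Substituting into the characteristic polynomial of `J(x)` gives
`(λ + 2)(λ² + x₁² + x₂²)`, and `x₁² + x₂² = √(p² + 4)` because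
`(x₁² + x₂²)² = (x₁² - x₂²)² + 4(x₁x₂)² = p² + 4`.
-/

theorem det_smul_one_sub_idmdeJacobian (p lam : ℝ) (x : ℝ × ℝ × ℝ) :
    (lam • (1 : Matrix (Fin 3) (Fin 3) ℝ) - idmdeJacobian p x).det =
      lam ^ 3 + 2 * lam ^ 2 +
        (1 + x.1 ^ 2 + x.2.1 ^ 2 - x.2.2 * (x.2.2 - p)) * lam +
        (x.1 ^ 2 + x.2.1 ^ 2 + x.1 * x.2.1 * (2 * x.2.2 - p)) := by
  simp [Matrix.det_fin_three, idmdeJacobian]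
  ring

theorem idmde_eq_zero_iff {p : ℝ} {x : ℝ × ℝ × ℝ} :
    idmde p x = 0 ↔
      x.2.1 * x.2.2 = x.1 ∧ (x.2.2 - p) * x.1 = x.2.1 ∧ x.1 * x.2.1 = 1 := by
  simp only [idmde, Prod.ext_iff, Prod.fst_zero, Prod.snd_zero, sub_eq_zero]
  rw [eq_comm (a := (1 : ℝ))]

namespace IdmdeEquilibrium

variable {p : ℝ} {x : ℝ × ℝ × ℝ}

theorem fst_mul_snd_fst (hx : idmde p x = 0) : x.1 * x.2.1 = 1 :=
  (idmde_eq_zero_iff.mp hx).2.2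

theorem fst_sq (hx : idmde p x = 0) : x.1 ^ 2 = x.2.2 := by
  obtain ⟨h₁, -, h₃⟩ := idmde_eq_zero_iff.mp hx
  calc x.1 ^ 2 = x.1 * (x.2.1 * x.2.2) := by rw [h₁]; ring
    _ = x.2.2 := by rw [← mul_assoc, h₃, one_mul]

theorem snd_fst_sq (hx : idmde p x = 0) : x.2.1 ^ 2 = x.2.2 - p := by
  obtain ⟨-, h₂, h₃⟩ := idmde_eq_zero_iff.mp hx
  calc x.2.1 ^ 2 = x.2.1 * ((x.2.2 - p) * x.1) := by rw [h₂]; ring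
    _ = x.2.2 - p := by rw [mul_comm _ x.1, ← mul_assoc, mul_comm x.2.1, h₃, one_mul]

theorem snd_snd_mul_sub (hx : idmde p x = 0) : x.2.2 * (x.2.2 - p) = 1 := by
  calc x.2.2 * (x.2.2 - p) = x.1 ^ 2 * x.2.1 ^ 2 := by rw [fst_sq hx, snd_fst_sq hx]
    _ = 1 := by rw [← mul_pow, fst_mul_snd_fst hx, one_pow]

theorem det_smul_one_sub_idmdeJacobian (hx : idmde p x = 0) (lam : ℝ) :
    (lam • (1 : Matrix (Fin 3) (Fin 3) ℝ) - idmdeJacobian p x).det =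
      (lam + 2) * (lam ^ 2 + (x.1 ^ 2 + x.2.1 ^ 2)) := by
  rw [_root_.det_smul_one_sub_idmdeJacobian, snd_snd_mul_sub hx, fst_mul_snd_fst hx, fst_sq hx,
    snd_fst_sq hx]
  ring

theorem sqrt_sq_add_four (hx : idmde p x = 0) :
    Real.sqrt (p ^ 2 + 4) = x.1 ^ 2 + x.2.1 ^ 2 := by
  have hsq : p ^ 2 + 4 = (x.1 ^ 2 + x.2.1 ^ 2) ^ 2 := by
    have hp : p = x.1 ^ 2 - x.2.1 ^ 2 := by rw [fst_sq hx, snd_fst_sq hx]; ring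
    calc p ^ 2 + 4 = (x.1 ^ 2 - x.2.1 ^ 2) ^ 2 + 4 * (x.1 * x.2.1) ^ 2 := by
          rw [fst_mul_snd_fst hx, ← hp]; ring
      _ = (x.1 ^ 2 + x.2.1 ^ 2) ^ 2 := by ring
  rw [hsq, Real.sqrt_sq (by positivity)]

end IdmdeEquilibrium

theorem idmde_charpoly_factorization_general (p : ℝ)
    (x : ℝ × ℝ × ℝ) (hx : idmde p x = 0) :
    ∀ lam : ℝ,
      (lam • (1 : Matrix (Fin 3) (Fin 3) ℝ) - idmdeJacobian p x).det =
        (lam + 2) * (lam ^ 2 + Real.sqrt (p ^ 2 + 4)) := by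
  intro lam
  rw [IdmdeEquilibrium.det_smul_one_sub_idmdeJacobian hx, IdmdeEquilibrium.sqrt_sq_add_four hx]

/-- for every `p > 0` and every equilibrium `x` of the IDMDE vector
field, the characteristic polynomial of `J(x)` factors as
`det(λI − J(x)) = (λ + 2)·(λ² + √(p²+4))`. -/
theorem idmde_charpoly_factorization (p : ℝ) (hp : 0 < p)
    (x : ℝ × ℝ × ℝ) (hx : idmde p x = 0) :
    ∀ lam : ℝ,
      (lam • (1 : Matrix (Fin 3) (Fin 3) ℝ) - idmdeJacobian p x).det =
        (lam + 2) * (lam ^ 2 + Real.sqrt (p ^ 2 + 4)) :=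
  idmde_charpoly_factorization_general p x hx
end

section
/- (Matignon stability condition for all p > 0, content of Conjecture 1.) For every real parameter p > 0, every equilibrium x of the IDMDE vector field, every eigenvalue σ ∈ ℂ of the Jacobian matrix J(x), and every fractional order q ∈ (0,1), one has |arg σ| > q·π/2; moreover the minimum of |arg σ| over the eigenvalues equals π/2, independent of p. -/
/-- The Jacobian matrix of the IDMDE vector field with parameter `p` at
`x = (x₁,x₂,x₃)`, regarded as a complex 3×3 matrix. -/
def idmdeJacobianC (p : ℝ) (x : ℝ × ℝ × ℝ) : Matrix (Fin 3) (Fin 3) ℂ :=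
  !![-1, (x.2.2 : ℂ), (x.2.1 : ℂ);
     ((x.2.2 - p : ℝ) : ℂ), -1, (x.1 : ℂ);
     (-x.2.1 : ℝ), (-x.1 : ℝ), 0]

/-!
At an equilibrium `(a, b, c)` one has `a b = 1`, `a² = c` and `b² = c - p`, and with these relations
the characteristic polynomial of the Jacobian factors as `(σ + 2) (σ² + a² + b²)`. As
`a² + b² ≥ 2 a b = 2`, the eigenvalues are `-2` and `±i √(a² + b²)`, whose arguments have absolute
values `π` and `π / 2`.
-/

open Complex Matrix

theorem idmde_eq_zero_iff_s10 {p a b c : ℝ} :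
    idmde p (a, b, c) = 0 ↔ a * b = 1 ∧ a ^ 2 = c ∧ b ^ 2 = c - p := by
  simp only [idmde, Prod.mk_eq_zero, sub_eq_zero]
  constructor
  · rintro ⟨h₁, h₂, h₃⟩
    exact ⟨h₃.symm, by linear_combination -a * h₁ - c * h₃,
      by linear_combination -b * h₂ - (c - p) * h₃⟩
  · rintro ⟨hab, ha, hb⟩
    refine ⟨?_, ?_, hab.symm⟩
    · linear_combination -b * ha + a * hab
    · linear_combination -a * hb + b * hab

theorem det_scalar_sub_idmdeJacobianC {p a b c : ℝ} (hab : a * b = 1) (ha : a ^ 2 = c)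
    (hb : b ^ 2 = c - p) (σ : ℂ) :
    (scalar (Fin 3) σ - idmdeJacobianC p (a, b, c)).det =
      (σ + 2) * (σ ^ 2 + ((a ^ 2 + b ^ 2 : ℝ) : ℂ)) := by
  have hab' : (a : ℂ) * b = 1 := by exact_mod_cast congrArg ofReal hab
  have ha' : (a : ℂ) ^ 2 = c := by exact_mod_cast congrArg ofReal ha
  have hb' : (b : ℂ) ^ 2 = c - p := by exact_mod_cast congrArg ofReal hb
  simp only [det_fin_three, idmdeJacobianC, scalar_apply, Matrix.sub_apply, of_apply, cons_val',
    cons_val_zero, cons_val_one, cons_val, cons_val_fin_one, diagonal_apply_eq, ne_eq,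
    Fin.reduceEq, not_false_eq_true, diagonal_apply_ne, ofReal_sub, ofReal_neg, ofReal_add,
    ofReal_pow]
  linear_combination ((2 * (c : ℂ) - p) - σ * ((a : ℂ) * b + 1)) * hab' +
      σ * (b : ℂ) ^ 2 * ha' + σ * (c : ℂ) * hb' - ha' - hb'

theorem spectrum_idmdeJacobianC {p a b c : ℝ} (hx : idmde p (a, b, c) = 0) :
    spectrum ℂ (idmdeJacobianC p (a, b, c)) =
      {-2, √(a ^ 2 + b ^ 2) * I, -(√(a ^ 2 + b ^ 2) * I)} := by
  obtain ⟨hab, ha, hb⟩ := idmde_eq_zero_iff_s10.mp hx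
  have hsq : ((√(a ^ 2 + b ^ 2) : ℝ) * I : ℂ) ^ 2 = -((a ^ 2 + b ^ 2 : ℝ) : ℂ) := by
    rw [mul_pow, I_sq, ← ofReal_pow, Real.sq_sqrt (by positivity), mul_neg_one]
  ext σ
  rw [mem_spectrum_iff_isRoot_charpoly, Polynomial.IsRoot.def, eval_charpoly,
    det_scalar_sub_idmdeJacobianC hab ha hb, mul_eq_zero, add_eq_zero_iff_eq_neg,
    add_eq_zero_iff_eq_neg, ← hsq, sq_eq_sq_iff_eq_or_eq_neg]
  simp only [Set.mem_insert_iff, Set.mem_singleton_iff]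

theorem abs_arg_ofReal_mul_I {r : ℝ} (hr : 0 < r) : |arg (r * I)| = Real.pi / 2 := by
  rw [arg_real_mul I hr, arg_I, abs_of_pos Real.pi_div_two_pos]

theorem abs_arg_neg_ofReal_mul_I {r : ℝ} (hr : 0 < r) : |arg (-(r * I))| = Real.pi / 2 := by
  rw [← mul_neg, arg_real_mul (-I) hr, arg_neg_I, abs_neg, abs_of_pos Real.pi_div_two_pos]

theorem idmde_matignon_all_p_general (p : ℝ)
    (x : ℝ × ℝ × ℝ) (hx : idmde p x = 0) :
    (∀ σ ∈ spectrum ℂ (idmdeJacobianC p x),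
      ∀ q : ℝ, 0 < q → q < 1 → q * Real.pi / 2 < |σ.arg|) ∧
    IsLeast {a : ℝ | ∃ σ ∈ spectrum ℂ (idmdeJacobianC p x), a = |σ.arg|}
      (Real.pi / 2) := by
  obtain ⟨a, b, c⟩ := x
  have hr : 0 < √(a ^ 2 + b ^ 2) := by
    obtain ⟨hab, -⟩ := idmde_eq_zero_iff_s10.mp hx
    exact Real.sqrt_pos.mpr (by nlinarith [sq_nonneg (a - b)])
  have hle : ∀ σ ∈ spectrum ℂ (idmdeJacobianC p (a, b, c)), Real.pi / 2 ≤ |σ.arg| := by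
    rw [spectrum_idmdeJacobianC hx]
    rintro σ (rfl | rfl | rfl)
    · rw [arg_eq_pi_iff.mpr ⟨by norm_num, by norm_num⟩, abs_of_pos Real.pi_pos]
      linarith [Real.pi_pos]
    · exact (abs_arg_ofReal_mul_I hr).ge
    · exact (abs_arg_neg_ofReal_mul_I hr).ge
  refine ⟨fun σ hσ q _ hq₁ => ?_, ⟨√(a ^ 2 + b ^ 2) * I, ?_, (abs_arg_ofReal_mul_I hr).symm⟩, ?_⟩
  · calc q * Real.pi / 2 < Real.pi / 2 := by nlinarith [Real.pi_pos]
      _ ≤ |σ.arg| := hle σ hσ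
  · rw [spectrum_idmdeJacobianC hx]
    exact Set.mem_insert_of_mem _ (Set.mem_insert _ _)
  · rintro _ ⟨σ, hσ, rfl⟩
    exact hle σ hσ

/-- Matignon stability condition for all `p > 0`, Conjecture 1:
for every `p > 0`, every equilibrium `x` of the IDMDE vector field, every
eigenvalue `σ` of `J(x)` and every fractional order `q ∈ (0,1)`, one has
`|arg σ| > q·π/2`; moreover the minimum of `|arg σ|` over the eigenvalues equals
`π/2`, independent of `p`. -/
theorem idmde_matignon_all_p (p : ℝ) (hp : 0 < p)
    (x : ℝ × ℝ × ℝ) (hx : idmde p x = 0) :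
    (∀ σ ∈ spectrum ℂ (idmdeJacobianC p x),
      ∀ q : ℝ, 0 < q → q < 1 → q * Real.pi / 2 < |σ.arg|) ∧
    IsLeast {a : ℝ | ∃ σ ∈ spectrum ℂ (idmdeJacobianC p x), a = |σ.arg|}
      (Real.pi / 2) :=
  idmde_matignon_all_p_general p x hx
end
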